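/- arXiv:0803.1495 — 3 statements merged into one kernel-verified Lean document; each statement's English description precedes it below -/
import Mathlib

section
/- The degenerate six-qubit code corrects an arbitrary single-qubit error: with S = span{h1,…,h5} ⊆ (ZMod 2)^6 × (ZMod 2)^6 the stabilizer spanned by the Pauli strings YIZXXY, ZXIIXZ, IZXXXX, IIIZIZ, ZZZIZI, every element of the symplectic orthogonal complement S^⊥ whose qubit weight is 1 or 2 lies in S. Equivalently, for every two distinct single-qubit Pauli errors E_a, E_b (vectors of qubit weight ≤ 1), the sum E_a + E_b either has nonzero symplectic product with some h_i or lies in S. -/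
/-- A 6-qubit Pauli operator modulo phase: the pair `(x|z)` of X-components
and Z-components. -/
abbrev PauliVec6 := (Fin 6 → ZMod 2) × (Fin 6 → ZMod 2)

/-- The symplectic product of `(x|z)` and `(x'|z')`, namely `x·z' + z·x'`.
Two Pauli operators commute iff their symplectic product is `0`. -/
def symp (v w : PauliVec6) : ZMod 2 :=
  (∑ i, v.1 i * w.2 i) + ∑ i, v.2 i * w.1 i

/-- The qubit weight of `(x|z)`: the number of qubits on which the Pauli
operator acts nontrivially. -/
def qwt (v : PauliVec6) : ℕ :=
  (Finset.univ.filter fun i => (v.1 i, v.2 i) ≠ (0, 0)).card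

/-- The Pauli string YIZXXY. -/
def h1 : PauliVec6 := (![1, 0, 0, 1, 1, 1], ![1, 0, 1, 0, 0, 1])
/-- The Pauli string ZXIIXZ. -/
def h2 : PauliVec6 := (![0, 1, 0, 0, 1, 0], ![1, 0, 0, 0, 0, 1])
/-- The Pauli string IZXXXX. -/
def h3 : PauliVec6 := (![0, 0, 1, 1, 1, 1], ![0, 1, 0, 0, 0, 0])
/-- The Pauli string IIIZIZ. -/
def h4 : PauliVec6 := (![0, 0, 0, 0, 0, 0], ![0, 0, 0, 1, 0, 1])
/-- The Pauli string ZZZIZI. -/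
def h5 : PauliVec6 := (![0, 0, 0, 0, 0, 0], ![1, 1, 1, 0, 1, 0])

/-- The stabilizer of the degenerate six-qubit code. -/
def S : Submodule (ZMod 2) PauliVec6 :=
  Submodule.span (ZMod 2) ({h1, h2, h3, h4, h5} : Set PauliVec6)

lemma key12 : ∀ a0 a1 a2 a3 a4 a5 b0 b1 b2 b3 b4 b5 : ZMod 2,
    symp (![a0,a1,a2,a3,a4,a5], ![b0,b1,b2,b3,b4,b5]) h1 = 0 →
    symp (![a0,a1,a2,a3,a4,a5], ![b0,b1,b2,b3,b4,b5]) h2 = 0 →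
    symp (![a0,a1,a2,a3,a4,a5], ![b0,b1,b2,b3,b4,b5]) h3 = 0 →
    symp (![a0,a1,a2,a3,a4,a5], ![b0,b1,b2,b3,b4,b5]) h4 = 0 →
    symp (![a0,a1,a2,a3,a4,a5], ![b0,b1,b2,b3,b4,b5]) h5 = 0 →
    (qwt (![a0,a1,a2,a3,a4,a5], ![b0,b1,b2,b3,b4,b5]) = 1 ∨
     qwt (![a0,a1,a2,a3,a4,a5], ![b0,b1,b2,b3,b4,b5]) = 2) →
    (![a0,a1,a2,a3,a4,a5], ![b0,b1,b2,b3,b4,b5]) = h4 := by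
  simp only [symp, qwt, h1, h2, h3, h4, h5, Fin.sum_univ_six, Finset.card_filter,
    Matrix.cons_val_zero, Matrix.cons_val_one, Matrix.head_cons, Matrix.cons_val_two,
    Matrix.tail_cons, Matrix.cons_val_three, Matrix.cons_val_four, Matrix.cons_val_fin_one,
    Matrix.cons_val', Matrix.cons_val_succ, Prod.mk.injEq, ne_eq, mul_one, mul_zero,
    one_mul, zero_mul, add_zero, zero_add]
  decide

lemma key (v : PauliVec6) (e1 : symp v h1 = 0) (e2 : symp v h2 = 0)
    (e3 : symp v h3 = 0) (e4 : symp v h4 = 0) (e5 : symp v h5 = 0)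
    (hw : qwt v = 1 ∨ qwt v = 2) : v = h4 := by
  obtain ⟨x, z⟩ := v
  have hx : x = ![x 0, x 1, x 2, x 3, x 4, x 5] := by
    funext i; fin_cases i <;> rfl
  have hz : z = ![z 0, z 1, z 2, z 3, z 4, z 5] := by
    funext i; fin_cases i <;> rfl
  rw [show ((x, z) : PauliVec6) = (![x 0, x 1, x 2, x 3, x 4, x 5], ![z 0, z 1, z 2, z 3, z 4, z 5]) by rw [← hx, ← hz]] at e1 e2 e3 e4 e5 hw ⊢
  exact key12 _ _ _ _ _ _ _ _ _ _ _ _ e1 e2 e3 e4 e5 hw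

/-- The degenerate six-qubit code corrects an arbitrary single-qubit error:
every element of the symplectic orthogonal complement `S^⊥` of qubit weight
1 or 2 lies in `S`. -/
theorem six_qubit_code_distance_three :
    ∀ v : PauliVec6, (∀ s ∈ S, symp v s = 0) →
      (qwt v = 1 ∨ qwt v = 2) → v ∈ S := by
  intro v hv hw
  have m1 : h1 ∈ S := Submodule.subset_span (by simp)
  have m2 : h2 ∈ S := Submodule.subset_span (by simp)
  have m3 : h3 ∈ S := Submodule.subset_span (by simp)
  have m4 : h4 ∈ S := Submodule.subset_span (by simp)
  have m5 : h5 ∈ S := Submodule.subset_span (by simp)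
  rw [key v (hv h1 m1) (hv h2 m2) (hv h3 m3) (hv h4 m4) (hv h5 m5) hw]
  exact m4
end

section
/- The six-qubit subsystem code obtained from the degenerate six-qubit code corrects an arbitrary single-qubit error using only the four stabilizer generators h1, h2, h3, h5: let h1, h2, h3, h5 ∈ (ZMod 2)^6 × (ZMod 2)^6 correspond to the Pauli strings YIZXXY, ZXIIXZ, IZXXXX, ZZZIZI, and let G = span{h1, h2, h3, h5, X₄, Z₄Z₆} be the gauge group, where X₄ is the vector with x = (0,0,0,1,0,0), z = 0 and Z₄Z₆ is the vector with x = 0, z = (0,0,0,1,0,1). Then for every vector v ∈ (ZMod 2)^6 × (ZMod 2)^6 of qubit weight 1 or 2 (a product of two single-qubit Pauli errors), either some h ∈ {h1, h2, h3, h5} has symplectic product 1 with v, or v ∈ G. -/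
/-- The gauge operator X₄ (an X on qubit four). -/
def X4 : PauliVec6 := (![0, 0, 0, 1, 0, 0], ![0, 0, 0, 0, 0, 0])
/-- The gauge operator Z₄Z₆ (Z's on qubits four and six). -/
def Z4Z6 : PauliVec6 := (![0, 0, 0, 0, 0, 0], ![0, 0, 0, 1, 0, 1])

/-- The gauge group of the six-qubit subsystem code. -/
def G : Submodule (ZMod 2) PauliVec6 :=
  Submodule.span (ZMod 2) ({h1, h2, h3, h5, X4, Z4Z6} : Set PauliVec6)

set_option maxRecDepth 100000 in
set_option synthInstance.maxHeartbeats 1000000 in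
set_option synthInstance.maxSize 10000 in
set_option maxHeartbeats 10000000 in
lemma key12_s12 : ∀ a b c d e f g h i j k l : ZMod 2,
    (qwt (![a,b,c,d,e,f], ![g,h,i,j,k,l]) = 1 ∨ qwt (![a,b,c,d,e,f], ![g,h,i,j,k,l]) = 2) →
    (symp h1 (![a,b,c,d,e,f], ![g,h,i,j,k,l]) = 1 ∨
     symp h2 (![a,b,c,d,e,f], ![g,h,i,j,k,l]) = 1 ∨
     symp h3 (![a,b,c,d,e,f], ![g,h,i,j,k,l]) = 1 ∨
     symp h5 (![a,b,c,d,e,f], ![g,h,i,j,k,l]) = 1) ∨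
    ((![a,b,c,d,e,f], ![g,h,i,j,k,l]) = X4 ∨
     (![a,b,c,d,e,f], ![g,h,i,j,k,l]) = Z4Z6 ∨
     (![a,b,c,d,e,f], ![g,h,i,j,k,l]) = X4 + Z4Z6) := by decide

lemma X4_mem : X4 ∈ G := Submodule.subset_span (by simp [Set.mem_insert_iff])

lemma Z4Z6_mem : Z4Z6 ∈ G := Submodule.subset_span (by simp [Set.mem_insert_iff])

/-- The six-qubit subsystem code corrects an arbitrary single-qubit error using
only the four stabilizer generators h1, h2, h3, h5: every vector of qubit
weight 1 or 2 either anticommutes with one of h1, h2, h3, h5 or lies in the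
gauge group `G`. -/
theorem six_qubit_subsystem_code_corrects :
    ∀ v : PauliVec6, (qwt v = 1 ∨ qwt v = 2) →
      (∃ h ∈ ({h1, h2, h3, h5} : Set PauliVec6), symp h v = 1) ∨ v ∈ G := by
  intro v hv
  have hveq : v = (![v.1 0, v.1 1, v.1 2, v.1 3, v.1 4, v.1 5],
      ![v.2 0, v.2 1, v.2 2, v.2 3, v.2 4, v.2 5]) := by
    refine Prod.ext ?_ ?_ <;> funext i <;> fin_cases i <;> rfl
  rw [hveq] at hv ⊢
  rcases key12_s12 (v.1 0) (v.1 1) (v.1 2) (v.1 3) (v.1 4) (v.1 5)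
      (v.2 0) (v.2 1) (v.2 2) (v.2 3) (v.2 4) (v.2 5) hv with
    (h | h | h | h) | (h | h | h)
  · exact Or.inl ⟨h1, by simp, h⟩
  · exact Or.inl ⟨h2, by simp, h⟩
  · exact Or.inl ⟨h3, by simp, h⟩
  · exact Or.inl ⟨h5, by simp, h⟩
  · exact Or.inr (h ▸ X4_mem)
  · exact Or.inr (h ▸ Z4Z6_mem)
  · exact Or.inr (h ▸ add_mem X4_mem Z4Z6_mem)
end

section
/- The degenerate six-qubit code has every physical qubit genuinely entangled with the rest (so it is not a trivial one-qubit extension of the five-qubit code): with S = span{h1,…,h5} ⊆ (ZMod 2)^6 × (ZMod 2)^6 the stabilizer spanned by the Pauli strings YIZXXY, ZXIIXZ, IZXXXX, IIIZIZ, ZZZIZI, the subspace S contains no element of qubit weight 1, and for every qubit index j ∈ {1,…,6} the projection map π_j : S → (ZMod 2)², (x|z) ↦ (x_j, z_j), is surjective. -/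
def combo (a b c d e : ZMod 2) : PauliVec6 := a•h1 + b•h2 + c•h3 + d•h4 + e•h5

lemma combo_mem (a b c d e : ZMod 2) : combo a b c d e ∈ S := by
  have m1 : h1 ∈ S := Submodule.subset_span (by simp)
  have m2 : h2 ∈ S := Submodule.subset_span (by simp)
  have m3 : h3 ∈ S := Submodule.subset_span (by simp)
  have m4 : h4 ∈ S := Submodule.subset_span (by simp)
  have m5 : h5 ∈ S := Submodule.subset_span (by simp)
  exact S.add_mem (S.add_mem (S.add_mem (S.add_mem (S.smul_mem a m1) (S.smul_mem b m2)) (S.smul_mem c m3)) (S.smul_mem d m4)) (S.smul_mem e m5)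

lemma mem_S {v : PauliVec6} (h : v ∈ S) : ∃ a b c d e, v = combo a b c d e := by
  induction h using Submodule.span_induction with
  | mem x hx =>
    simp only [Set.mem_insert_iff, Set.mem_singleton_iff] at hx
    rcases hx with h | h | h | h | h
    · exact ⟨1, 0, 0, 0, 0, by simp [combo, h]⟩
    · exact ⟨0, 1, 0, 0, 0, by simp [combo, h]⟩
    · exact ⟨0, 0, 1, 0, 0, by simp [combo, h]⟩
    · exact ⟨0, 0, 0, 1, 0, by simp [combo, h]⟩
    · exact ⟨0, 0, 0, 0, 1, by simp [combo, h]⟩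
  | zero => exact ⟨0, 0, 0, 0, 0, by simp [combo]⟩
  | add x y _ _ hx hy =>
    obtain ⟨a, b, c, d, e, rfl⟩ := hx
    obtain ⟨a', b', c', d', e', rfl⟩ := hy
    exact ⟨a+a', b+b', c+c', d+d', e+e', by simp only [combo]; module⟩
  | smul r x _ hx =>
    obtain ⟨a, b, c, d, e, rfl⟩ := hx
    exact ⟨r*a, r*b, r*c, r*d, r*e, by simp only [combo]; module⟩

/-- Every physical qubit of the degenerate six-qubit code is genuinely
entangled with the rest: the stabilizer `S` contains no element of qubit
weight 1, and for every qubit index `j` the projection onto the Pauli label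
`(x_j, z_j)` of qubit `j` is surjective from `S` onto `(ZMod 2)²`. -/
theorem six_qubit_code_nontrivial_on_every_qubit :
    (∀ v ∈ S, qwt v ≠ 1) ∧
    (∀ j : Fin 6, ∀ p : ZMod 2 × ZMod 2, ∃ v ∈ S, (v.1 j, v.2 j) = p) := by
  constructor
  · intro v hv
    obtain ⟨a, b, c, d, e, rfl⟩ := mem_S hv
    clear hv; revert a b c d e; decide
  · intro j p
    have : ∃ a b c d e : ZMod 2, ((combo a b c d e).1 j, (combo a b c d e).2 j) = p := by
      revert j p; decide
    obtain ⟨a, b, c, d, e, h⟩ := this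
    exact ⟨combo a b c d e, combo_mem a b c d e, h⟩
end
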